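/- Let D be a finite set of tuples partitioned into (D^en, D^ex) with |D^en| = N, and let p be the probabilistic database defined by p(W) := 1/2^N if D^ex ⊆ W and p(W) := 0 otherwise. Then for every query Q : Finset D → ℝ and every τ ∈ D^en, the causal-effect score equals the Banzhaf power index: CE(p,Q,τ) = Σ_{W ⊆ D^en \ {τ}} Δ(Q,W,τ) / 2^{N−1}. -/

import Mathlib

open Finset

variable {α : Type*} [DecidableEq α]

/-- The positively intervened distribution `p^{+τ}`:
`p^{+τ}(W) = Σ_{W' ⊆ D, W' ∪ {τ} = W} p(W')`. -/
noncomputable def pPlus (D : Finset α) (p : Finset α → ℝ) (τ : α) (W : Finset α) : ℝ :=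
  ∑ W' ∈ D.powerset.filter (fun W' => W' ∪ {τ} = W), p W'

/-- The negatively intervened distribution `p^{−τ}`:
`p^{−τ}(W) = Σ_{W' ⊆ D, W' \ {τ} = W} p(W')`. -/
noncomputable def pMinus (D : Finset α) (p : Finset α → ℝ) (τ : α) (W : Finset α) : ℝ :=
  ∑ W' ∈ D.powerset.filter (fun W' => W' \ {τ} = W), p W'

/-- The generalized causal-effect score of tuple `τ` for query `Q` on the PDB `p` over `D`:
`CE(p,Q,τ) = Σ_{W ⊆ D} p^{+τ}(W)·Q[W] − Σ_{W ⊆ D} p^{−τ}(W)·Q[W]`. -/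
noncomputable def CE (D : Finset α) (p : Finset α → ℝ) (Q : Finset α → ℝ) (τ : α) : ℝ :=
  ∑ W ∈ D.powerset, pPlus D p τ W * Q W - ∑ W ∈ D.powerset, pMinus D p τ W * Q W

/-- `Δ(Q,W,τ) = Q[W ∪ D^ex ∪ {τ}] − Q[W ∪ D^ex]`. -/
noncomputable def Delta (Dex : Finset α) (Q : Finset α → ℝ) (W : Finset α) (τ : α) : ℝ :=
  Q (W ∪ Dex ∪ {τ}) - Q (W ∪ Dex)

/-
For the uniform PDB every world containing `D^ex` has the same weight `1/2^N`, so the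
causal-effect score is `1/2^N` times the sum of `Q[W ∪ {τ}] − Q[W \ {τ}]` over the worlds
`W = S ∪ D^ex`, `S ⊆ D^en`. The subsets `S` and `S ∪ {τ}` contribute the same marginal
contribution `Δ(Q, S \ {τ}, τ)`, so the sum is twice the Banzhaf sum over `D^en \ {τ}`.
-/

theorem Finset.sum_sum_fiber_mul {ι κ R : Type*} [DecidableEq κ]
    [NonUnitalNonAssocSemiring R] {s : Finset ι} {t : Finset κ} {g : ι → κ}
    (h : ∀ i ∈ s, g i ∈ t) (p : ι → R) (Q : κ → R) :
    ∑ j ∈ t, (∑ i ∈ s with g i = j, p i) * Q j = ∑ i ∈ s, p i * Q (g i) := by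
  rw [← sum_fiberwise_of_maps_to h]
  refine sum_congr rfl fun j _ => ?_
  rw [sum_mul]
  exact sum_congr rfl fun i hi => by rw [(mem_filter.1 hi).2]

theorem sum_pPlus_mul {D : Finset α} {τ : α} (hτ : τ ∈ D) (p Q : Finset α → ℝ) :
    ∑ W ∈ D.powerset, pPlus D p τ W * Q W = ∑ W ∈ D.powerset, p W * Q (insert τ W) := by
  have hmaps : ∀ W ∈ D.powerset, W ∪ {τ} ∈ D.powerset := fun W hW =>
    mem_powerset.2 (union_subset (mem_powerset.1 hW) (singleton_subset_iff.2 hτ))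
  simp_rw [pPlus, sum_sum_fiber_mul hmaps, union_comm _ {τ}, ← insert_eq]

theorem sum_pMinus_mul (D : Finset α) (τ : α) (p Q : Finset α → ℝ) :
    ∑ W ∈ D.powerset, pMinus D p τ W * Q W = ∑ W ∈ D.powerset, p W * Q (W.erase τ) := by
  have hmaps : ∀ W ∈ D.powerset, W \ {τ} ∈ D.powerset := fun W hW =>
    mem_powerset.2 (sdiff_subset.trans (mem_powerset.1 hW))
  simp_rw [pMinus, sum_sum_fiber_mul hmaps, sdiff_singleton_eq_erase]

theorem CE_eq_sum_mul_sub {D : Finset α} {τ : α} (hτ : τ ∈ D) (p Q : Finset α → ℝ) :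
    CE D p Q τ = ∑ W ∈ D.powerset, p W * (Q (insert τ W) - Q (W.erase τ)) := by
  simp_rw [CE, sum_pPlus_mul hτ, sum_pMinus_mul, mul_sub, sum_sub_distrib]

theorem Finset.sum_powerset_filter_superset {M : Type*} [AddCommMonoid M] {A B : Finset α}
    (h : Disjoint A B) (f : Finset α → M) :
    ∑ W ∈ (A ∪ B).powerset with B ⊆ W, f W = ∑ S ∈ A.powerset, f (S ∪ B) := by
  have hinj : Set.InjOn (B ∪ ·) (A.powerset : Set (Finset α)) := fun S hS S' hS' hSS' => by
    rw [← union_sdiff_cancel_left (h.mono_left (mem_powerset.1 hS)).symm,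
      ← union_sdiff_cancel_left (h.mono_left (mem_powerset.1 hS')).symm]
    exact congrArg (· \ B) hSS'
  rw [← Icc_eq_filter_powerset, Icc_eq_image_powerset subset_union_right,
    union_sdiff_cancel_right h, sum_image hinj]
  simp_rw [union_comm B]

theorem Finset.sum_powerset_insert_sub_erase {M : Type*} [AddCommGroup M] {a : α}
    {s : Finset α} (ha : a ∉ s) (f : Finset α → M) :
    ∑ S ∈ (insert a s).powerset, (f (insert a S) - f (S.erase a)) =
      2 • ∑ T ∈ s.powerset, (f (insert a T) - f T) := by
  have hnotMem : ∀ T ∈ s.powerset, a ∉ T := fun T hT => notMem_mono (mem_powerset.1 hT) ha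
  rw [sum_powerset_insert ha, two_nsmul]
  congr 1
  · exact sum_congr rfl fun T hT => by rw [erase_eq_of_notMem (hnotMem T hT)]
  · exact sum_congr rfl fun T hT => by rw [insert_idem, erase_insert (hnotMem T hT)]

/-- For the uniform `U(1/2)` tuple-independent PDB (probability `1/2^N` on each world
containing `D^ex`, where `N = |D^en|`), the causal-effect score equals the Banzhaf power
index: `CE(p,Q,τ) = Σ_{W ⊆ D^en \ {τ}} Δ(Q,W,τ) / 2^{N−1}`. -/
theorem stmt2 (D Den Dex : Finset α)
    (hunion : Den ∪ Dex = D) (hdisj : Disjoint Den Dex)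
    (Q : Finset α → ℝ) (τ : α) (hτ : τ ∈ Den) :
    CE D (fun W => if Dex ⊆ W then 1 / 2 ^ Den.card else 0) Q τ =
      ∑ W ∈ (Den.erase τ).powerset, Delta Dex Q W τ / 2 ^ (Den.card - 1) := by
  have hτD : τ ∈ D := hunion ▸ mem_union_left Dex hτ
  have hτex : τ ∉ Dex := disjoint_left.mp hdisj hτ
  have hworld : ∀ S : Finset α, Q (insert τ (S ∪ Dex)) - Q ((S ∪ Dex).erase τ) =
      Q (insert τ S ∪ Dex) - Q (S.erase τ ∪ Dex) := fun S => by
    rw [insert_union, erase_union_distrib, erase_eq_of_notMem hτex]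
  have hDelta : ∀ T : Finset α, Delta Dex Q T τ = Q (insert τ T ∪ Dex) - Q (T ∪ Dex) :=
    fun T => by rw [Delta, union_comm _ {τ}, ← insert_eq, insert_union]
  have hBanzhaf : ∑ S ∈ Den.powerset, (Q (insert τ S ∪ Dex) - Q (S.erase τ ∪ Dex)) =
      2 • ∑ T ∈ (Den.erase τ).powerset, Delta Dex Q T τ := by
    simp_rw [hDelta]
    conv_lhs => rw [← insert_erase hτ]
    exact sum_powerset_insert_sub_erase (notMem_erase τ Den) fun S => Q (S ∪ Dex)
  have hcard : Den.card = (Den.erase τ).card + 1 := (card_erase_add_one hτ).symm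
  rw [CE_eq_sum_mul_sub hτD, ← hunion]
  simp_rw [ite_mul, zero_mul]
  rw [← sum_filter, sum_powerset_filter_superset hdisj, ← mul_sum]
  simp_rw [hworld]
  rw [hBanzhaf, ← sum_div, nsmul_eq_mul, Nat.cast_ofNat, hcard, Nat.add_sub_cancel, pow_succ]
  field_simp
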